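/- If G is a digraph with w(G) > 0 and n > w(G), then there is no digraph homomorphism from G to the directed cycle Cₙ; consequently w(G) is the largest n such that an epimorphism G → Cₙ exists. -/

import Mathlib

/-- A route in a digraph `(V, E)` starting at a vertex `u` is encoded by a list of
steps `(s, w)` where `s = 1` means the edge is traversed forwards into `w` and
`s = -1` means it is traversed backwards. -/
def IsRoute {V : Type*} (E : V → V → Prop) : V → List (ℤ × V) → Prop
  | _, [] => True
  | u, (s, w) :: t => ((s = 1 ∧ E u w) ∨ (s = -1 ∧ E w u)) ∧ IsRoute E w t

/-- The final vertex of a route starting at `u` with step list `l`. -/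
def routeEnd {V : Type*} : V → List (ℤ × V) → V
  | u, [] => u
  | _, (_, w) :: t => routeEnd w t

/-- The weight `σ(R)` of a route: the sum of its signs. -/
def routeWeight {V : Type*} (l : List (ℤ × V)) : ℤ := (l.map Prod.fst).sum

/-- A digraph homomorphism maps arcs to arcs. -/
def IsDigraphHom {V₁ V₂ : Type*} (E₁ : V₁ → V₁ → Prop) (E₂ : V₂ → V₂ → Prop)
    (φ : V₁ → V₂) : Prop :=
  ∀ u v, E₁ u v → E₂ (φ u) (φ v)

/-- The set `W` of positive weights of closed routes in the digraph `(V, E)`. -/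
def closedWeights {V : Type*} (E : V → V → Prop) : Set ℤ :=
  {n : ℤ | 0 < n ∧ ∃ (u : V) (l : List (ℤ × V)),
    IsRoute E u l ∧ routeEnd u l = u ∧ routeWeight l = n}

/-- `g` is the greatest common divisor of the set `S ⊆ ℤ` (with the convention
`gcd ∅ = 0`). -/
def IsSetGcd (S : Set ℤ) (g : ℤ) : Prop :=
  0 ≤ g ∧ (∀ n ∈ S, g ∣ n) ∧ ∀ d : ℤ, (∀ n ∈ S, d ∣ n) → d ∣ g

/-- Weak connectedness: any two vertices are joined by a route. -/
def WeaklyConnected {V : Type*} (E : V → V → Prop) : Prop :=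
  ∀ u v : V, ∃ l : List (ℤ × V), IsRoute E u l ∧ routeEnd u l = v

/-- Arc relation of the directed cycle `Cₙ` on `ZMod n`. -/
def cycleRel (n : ℕ) : ZMod n → ZMod n → Prop := fun i j => j = i + 1

/-- Arc relation of the directed path with vertex set `Fin n`. -/
def pathRel (n : ℕ) : Fin n → Fin n → Prop := fun i j => (i : ℕ) + 1 = (j : ℕ)


/-!
A homomorphism `φ : G → Cₙ` satisfies `φ (end R) = φ (start R) + σ(R)` along every route `R`,
so `n` divides the weight of every closed route, hence `n ∣ w` and `n ≤ w`. Conversely, closed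
routes of negative weight reverse to ones of positive weight, so `w` divides the weight of every
closed route; fixing a base vertex `u₀`, the weight mod `w` of any route from `u₀` to `v` is then
well defined and gives a homomorphism `G → C_w`. It is onto because a closed route of positive
weight `m ≥ w` has prefixes of every weight `0, …, m`, whose ends are sent to all of `ZMod w`.
-/

section

variable {V : Type*} {E : V → V → Prop}

@[simp] lemma routeEnd_append (u : V) (l₁ l₂ : List (ℤ × V)) :
    routeEnd u (l₁ ++ l₂) = routeEnd (routeEnd u l₁) l₂ := by
  induction l₁ generalizing u with
  | nil => rfl
  | cons p t ih => exact ih p.2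

@[simp] lemma routeWeight_nil : routeWeight ([] : List (ℤ × V)) = 0 := rfl

@[simp] lemma routeWeight_cons (s : ℤ) (v : V) (t : List (ℤ × V)) :
    routeWeight ((s, v) :: t) = s + routeWeight t := by
  simp [routeWeight]

@[simp] lemma routeWeight_append (l₁ l₂ : List (ℤ × V)) :
    routeWeight (l₁ ++ l₂) = routeWeight l₁ + routeWeight l₂ := by
  simp [routeWeight]

lemma IsRoute.append {u : V} {l₁ l₂ : List (ℤ × V)} (h₁ : IsRoute E u l₁)
    (h₂ : IsRoute E (routeEnd u l₁) l₂) : IsRoute E u (l₁ ++ l₂) := by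
  induction l₁ generalizing u with
  | nil => exact h₂
  | cons p t ih => exact ⟨h₁.1, ih h₁.2 h₂⟩

/-- The route `l` from `u` traversed backwards, starting at `routeEnd u l`. -/
def routeReverse : V → List (ℤ × V) → List (ℤ × V)
  | _, [] => []
  | u, (s, v) :: t => routeReverse v t ++ [(-s, u)]

@[simp] lemma routeEnd_routeReverse (u : V) (l : List (ℤ × V)) :
    routeEnd (routeEnd u l) (routeReverse u l) = u := by
  cases l with
  | nil => rfl
  | cons p t => simp [routeReverse, routeEnd]

@[simp] lemma routeWeight_routeReverse (u : V) (l : List (ℤ × V)) :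
    routeWeight (routeReverse u l) = -routeWeight l := by
  induction l generalizing u with
  | nil => rfl
  | cons p t ih =>
    obtain ⟨s, v⟩ := p
    simp [routeReverse, ih]

lemma IsRoute.reverse {u : V} {l : List (ℤ × V)} (h : IsRoute E u l) :
    IsRoute E (routeEnd u l) (routeReverse u l) := by
  induction l generalizing u with
  | nil => trivial
  | cons p t ih =>
    refine (ih h.2).append ⟨?_, trivial⟩
    rcases h.1 with ⟨hs, he⟩ | ⟨hs, he⟩
    · exact Or.inr ⟨by rw [hs], by rwa [routeEnd_routeReverse]⟩
    · exact Or.inl ⟨by rw [hs, neg_neg], by rwa [routeEnd_routeReverse]⟩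

/-- A discrete intermediate value property: the weight changes by `±1` at each step. -/
lemma IsRoute.exists_weight_eq {u : V} {l : List (ℤ × V)} (h : IsRoute E u l) {k : ℤ}
    (hk₀ : 0 ≤ k) (hk : k ≤ routeWeight l) : ∃ l', IsRoute E u l' ∧ routeWeight l' = k := by
  induction l generalizing u k with
  | nil => exact ⟨[], trivial, le_antisymm hk₀ hk⟩
  | cons p t ih =>
    obtain ⟨s, v⟩ := p
    rcases hk₀.eq_or_lt with rfl | hk_pos
    · exact ⟨[], trivial, rfl⟩
    have hs : s = 1 ∨ s = -1 := h.1.imp And.left And.left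
    rw [routeWeight_cons] at hk
    obtain ⟨l', hl', hwl'⟩ := ih h.2 (k := k - s) (by omega) (by omega)
    exact ⟨(s, v) :: l', ⟨h.1, hl'⟩, by rw [routeWeight_cons, hwl']; ring⟩

lemma IsSetGcd.dvd_routeWeight {g : ℤ} (hg : IsSetGcd (closedWeights E) g) {u : V}
    {l : List (ℤ × V)} (hl : IsRoute E u l) (hlu : routeEnd u l = u) : g ∣ routeWeight l := by
  rcases lt_trichotomy (routeWeight l) 0 with hneg | hzero | hpos
  · have hrev := hl.reverse
    rw [hlu] at hrev
    have hrevu : routeEnd u (routeReverse u l) = u := by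
      simpa only [hlu] using routeEnd_routeReverse u l
    rw [← neg_neg (routeWeight l), dvd_neg, ← routeWeight_routeReverse u]
    exact hg.2.1 _ ⟨by simpa using hneg, u, _, hrev, hrevu, rfl⟩
  · exact hzero ▸ dvd_zero g
  · exact hg.2.1 _ ⟨hpos, u, l, hl, hlu, rfl⟩

lemma IsSetGcd.nonempty {S : Set ℤ} {g : ℤ} (hg : IsSetGcd S g) (hg₀ : g ≠ 0) : S.Nonempty := by
  by_contra hS
  exact hg₀ (zero_dvd_iff.mp (hg.2.2 0 fun n hn => (hS ⟨n, hn⟩).elim))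

section Cycle

variable {n : ℕ} {φ : V → ZMod n}

lemma IsDigraphHom.map_routeEnd (hφ : IsDigraphHom E (cycleRel n) φ) {u : V}
    {l : List (ℤ × V)} (hl : IsRoute E u l) : φ (routeEnd u l) = φ u + routeWeight l := by
  induction l generalizing u with
  | nil => simp [routeEnd]
  | cons p t ih =>
    obtain ⟨s, v⟩ := p
    rw [routeEnd, ih hl.2, routeWeight_cons, Int.cast_add]
    rcases hl.1 with ⟨rfl, he⟩ | ⟨rfl, he⟩
    · rw [hφ _ _ he, Int.cast_one, add_assoc]
    · rw [hφ _ _ he, Int.cast_neg, Int.cast_one]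
      ring

lemma IsDigraphHom.natCast_dvd_of_isSetGcd (hφ : IsDigraphHom E (cycleRel n) φ) {g : ℤ}
    (hg : IsSetGcd (closedWeights E) g) : (n : ℤ) ∣ g := by
  refine hg.2.2 _ ?_
  rintro _ ⟨-, u, l, hl, hlu, rfl⟩
  have h := hφ.map_routeEnd hl
  rw [hlu, left_eq_add] at h
  exact (ZMod.intCast_zmod_eq_zero_iff_dvd _ n).mp h

lemma IsDigraphHom.surjective_of_isRoute [NeZero n] (hφ : IsDigraphHom E (cycleRel n) φ)
    {u : V} {l : List (ℤ × V)} (hl : IsRoute E u l) (hn : (n : ℤ) ≤ routeWeight l + 1) :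
    Function.Surjective φ := by
  intro x
  have hlt : ((x - φ u).val : ℤ) < n := by exact_mod_cast ZMod.val_lt _
  obtain ⟨l', hl', hwl'⟩ := hl.exists_weight_eq (k := (x - φ u).val) (by positivity) (by omega)
  refine ⟨routeEnd u l', ?_⟩
  rw [hφ.map_routeEnd hl', hwl', Int.cast_natCast, ZMod.natCast_zmod_val]
  ring

lemma exists_isDigraphHom_cycleRel (hconn : WeaklyConnected E)
    (hdvd : ∀ u l, IsRoute E u l → routeEnd u l = u → (n : ℤ) ∣ routeWeight l) :
    ∃ φ : V → ZMod n, IsDigraphHom E (cycleRel n) φ := by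
  rcases isEmpty_or_nonempty V with _ | ⟨⟨u₀⟩⟩
  · exact ⟨isEmptyElim, fun u => isEmptyElim u⟩
  choose L hL hLend using hconn u₀
  refine ⟨fun v => (routeWeight (L v) : ZMod n), fun u v he => ?_⟩
  have hback : IsRoute E v (routeReverse u₀ (L v)) := by simpa only [hLend v] using (hL v).reverse
  have hloop : IsRoute E u₀ (L u ++ (1, v) :: routeReverse u₀ (L v)) :=
    (hL u).append (by rw [hLend u]; exact ⟨Or.inl ⟨rfl, he⟩, hback⟩)
  have hloop_end : routeEnd u₀ (L u ++ (1, v) :: routeReverse u₀ (L v)) = u₀ := by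
    simpa only [routeEnd_append, hLend u, routeEnd, hLend v] using routeEnd_routeReverse u₀ (L v)
  have h := (ZMod.intCast_zmod_eq_zero_iff_dvd _ n).mpr (hdvd _ _ hloop hloop_end)
  simp only [routeWeight_append, routeWeight_cons, routeWeight_routeReverse, Int.cast_add,
    Int.cast_one, Int.cast_neg] at h
  change _ = _ + 1
  linear_combination -h

end Cycle

end

theorem weight_isGreatest_cycle_epi_general {V : Type*}
    (E : V → V → Prop) (hconn : WeaklyConnected E) (w : ℕ) (hw : 0 < w)
    (hgcd : IsSetGcd (closedWeights E) (w : ℤ)) :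
    (∀ n : ℕ, w < n → ¬ ∃ φ : V → ZMod n, IsDigraphHom E (cycleRel n) φ) ∧
      IsGreatest {n : ℕ | 0 < n ∧ ∃ φ : V → ZMod n,
        IsDigraphHom E (cycleRel n) φ ∧ Function.Surjective φ} w := by
  have hle : ∀ n : ℕ, (∃ φ : V → ZMod n, IsDigraphHom E (cycleRel n) φ) → n ≤ w := by
    rintro n ⟨φ, hφ⟩
    exact_mod_cast Int.le_of_dvd (by omega) (hφ.natCast_dvd_of_isSetGcd hgcd)
  obtain ⟨m, hm, u, l, hl, hlu, rfl⟩ := hgcd.nonempty (by omega)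
  have hwm : (w : ℤ) ≤ routeWeight l := Int.le_of_dvd hm (hgcd.dvd_routeWeight hl hlu)
  obtain ⟨φ, hφ⟩ := exists_isDigraphHom_cycleRel hconn fun _ _ => hgcd.dvd_routeWeight
  have : NeZero w := ⟨hw.ne'⟩
  exact ⟨fun n hn hφ => (hle n hφ).not_gt hn,
    ⟨hw, φ, hφ, hφ.surjective_of_isRoute hl (by omega)⟩,
    fun n ⟨_, φ, hφ, _⟩ => hle n ⟨φ, hφ⟩⟩

/-- if `w(G) = w > 0` then there is no digraph homomorphism from `G`
to `Cₙ` for `n > w`; consequently `w` is the largest `n` such that an epimorphism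
`G → Cₙ` exists. -/
theorem weight_isGreatest_cycle_epi {V : Type*} [Fintype V] [Nonempty V]
    (E : V → V → Prop) (hconn : WeaklyConnected E) (w : ℕ) (hw : 0 < w)
    (hgcd : IsSetGcd (closedWeights E) (w : ℤ)) :
    (∀ n : ℕ, w < n → ¬ ∃ φ : V → ZMod n, IsDigraphHom E (cycleRel n) φ) ∧
      IsGreatest {n : ℕ | 0 < n ∧ ∃ φ : V → ZMod n,
        IsDigraphHom E (cycleRel n) φ ∧ Function.Surjective φ} w :=
  weight_isGreatest_cycle_epi_general E hconn w hw hgcd
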